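/- For any real c and positive reals a, f, ∫₀^∞ ∫₀^{τ₃} ∫₀^{τ₂} (c/τ₃²) exp(-a τ₁) exp(-f τ₃) dτ₁ dτ₂ dτ₃ = (c(a+f)/a²)(log(a+f) − log f) − c/a. -/

import Mathlib

/-!
The two inner integrals are elementary and leave `(c / a²) e^{-fτ} (aτ - 1 + e^{-aτ}) / τ²`
under the outer integral. Writing `(aτ - 1 + e^{-aτ}) / τ² = ∫₀^a (a - u) e^{-uτ} du` and
exchanging the order of integration (the integrand is dominated by `a e^{-fτ}`), the Laplace
transform `∫₀^∞ e^{-(f+u)τ} dτ = 1 / (f + u)` reduces everything to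
`∫₀^a (a - u) / (f + u) du = (a + f) log ((a + f) / f) - a`.
-/

open MeasureTheory Set Real

theorem integral_Ioo_eq_sub_of_hasDerivAt {F f : ℝ → ℝ} {a b : ℝ} (hab : a ≤ b)
    (hderiv : ∀ x ∈ Icc a b, HasDerivAt F (f x) x) (hcont : ContinuousOn f (Icc a b)) :
    ∫ x in Ioo a b, f x = F b - F a := by
  rw [← integral_Ioc_eq_integral_Ioo, ← intervalIntegral.integral_of_le hab]
  rw [← uIcc_of_le hab] at hderiv hcont
  exact intervalIntegral.integral_eq_sub_of_hasDerivAt hderiv hcont.intervalIntegrable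

theorem integral_Ioo_exp_neg_mul {a : ℝ} (ha : a ≠ 0) {t : ℝ} (ht : 0 ≤ t) :
    ∫ x in Ioo 0 t, exp (-a * x) = (1 - exp (-a * t)) / a := by
  have hderiv (x : ℝ) : HasDerivAt (fun x => -exp (-a * x) / a) (exp (-a * x)) x :=
    (((hasDerivAt_id' x).const_mul (-a)).exp.neg.div_const a).congr_deriv (by field_simp)
  rw [integral_Ioo_eq_sub_of_hasDerivAt ht (fun x _ => hderiv x) (by fun_prop)]
  simp only [mul_zero, exp_zero]
  ring

theorem integral_Ioo_integral_Ioo_exp_neg_mul {a : ℝ} (ha : a ≠ 0) {t : ℝ} (ht : 0 ≤ t) :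
    ∫ s in Ioo 0 t, ∫ x in Ioo 0 s, exp (-a * x) = (a * t - 1 + exp (-a * t)) / a ^ 2 := by
  have hderiv (s : ℝ) :
      HasDerivAt (fun s => (a * s + exp (-a * s)) / a ^ 2) ((1 - exp (-a * s)) / a) s :=
    ((((hasDerivAt_id' s).const_mul a).add ((hasDerivAt_id' s).const_mul (-a)).exp).div_const
      (a ^ 2)).congr_deriv (by field_simp; ring)
  rw [setIntegral_congr_fun measurableSet_Ioo fun s hs => integral_Ioo_exp_neg_mul ha hs.1.le,
    integral_Ioo_eq_sub_of_hasDerivAt ht (fun s _ => hderiv s) (by fun_prop)]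
  simp only [mul_zero, exp_zero]
  ring

theorem integral_Ioo_sub_mul_exp_neg_mul {a τ : ℝ} (ha : 0 ≤ a) (hτ : τ ≠ 0) :
    ∫ u in Ioo 0 a, (a - u) * exp (-u * τ) = (a * τ - 1 + exp (-a * τ)) / τ ^ 2 := by
  have hderiv (u : ℝ) : HasDerivAt (fun u => exp (-u * τ) * (1 / τ ^ 2 - (a - u) / τ))
      ((a - u) * exp (-u * τ)) u :=
    ((((hasDerivAt_neg' u).mul_const τ).exp).mul ((((hasDerivAt_id' u).const_sub a).div_const
      τ).const_sub (1 / τ ^ 2))).congr_deriv (by field_simp; ring)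
  rw [integral_Ioo_eq_sub_of_hasDerivAt ha (fun u _ => hderiv u) (by fun_prop)]
  simp only [neg_zero, zero_mul, exp_zero]
  field_simp
  ring

theorem integral_Ioo_sub_div_add {a f : ℝ} (ha : 0 ≤ a) (hf : 0 < f) :
    ∫ u in Ioo 0 a, (a - u) / (f + u) = (a + f) * (log (a + f) - log f) - a := by
  have hne : ∀ u ∈ Icc 0 a, f + u ≠ 0 := fun u hu => by linarith [hu.1]
  have hderiv : ∀ u ∈ Icc 0 a,
      HasDerivAt (fun u => (a + f) * log (f + u) - u) ((a - u) / (f + u)) u := fun u hu =>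
    ((((hasDerivAt_id' u).const_add f).log (hne u hu)).const_mul (a + f)).sub (hasDerivAt_id' u)
      |>.congr_deriv (by field_simp [hne u hu]; ring)
  rw [integral_Ioo_eq_sub_of_hasDerivAt ha hderiv
    ((continuousOn_const.sub continuousOn_id).div (by fun_prop) hne)]
  rw [add_comm f a, add_zero, sub_zero]
  ring

theorem integrable_sub_mul_exp_neg_add_mul (a : ℝ) {f : ℝ} (hf : 0 < f) :
    Integrable (fun p : ℝ × ℝ => (a - p.1) * exp (-(f + p.1) * p.2))
      ((volume.restrict (Ioo 0 a)).prod (volume.restrict (Ioi 0))) := by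
  have hdom : Integrable (fun p : ℝ × ℝ => a * exp (-f * p.2))
      ((volume.restrict (Ioo 0 a)).prod (volume.restrict (Ioi 0))) :=
    (integrable_const a).mul_prod (integrableOn_exp_mul_Ioi (neg_neg_of_pos hf) 0)
  refine hdom.mono' (by fun_prop) ?_
  rw [Measure.prod_restrict, ae_restrict_iff' (measurableSet_Ioo.prod measurableSet_Ioi)]
  refine Filter.Eventually.of_forall fun ⟨u, τ⟩ ⟨hu, hτ⟩ => ?_
  have hu : 0 < u ∧ u < a := hu
  have hτ : 0 < τ := hτ
  rw [Real.norm_of_nonneg (mul_nonneg (by linarith) (exp_nonneg _))]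
  gcongr <;> nlinarith

theorem integral_Ioi_exp_neg_mul_mul_sub_one_add_exp_neg_mul_div_sq {a f : ℝ} (ha : 0 ≤ a)
    (hf : 0 < f) :
    ∫ τ in Ioi 0, exp (-f * τ) * (a * τ - 1 + exp (-a * τ)) / τ ^ 2
      = (a + f) * (log (a + f) - log f) - a :=
  calc ∫ τ in Ioi 0, exp (-f * τ) * (a * τ - 1 + exp (-a * τ)) / τ ^ 2
      = ∫ τ in Ioi 0, ∫ u in Ioo 0 a, (a - u) * exp (-(f + u) * τ) := by
        refine setIntegral_congr_fun measurableSet_Ioi fun τ (hτ : 0 < τ) => ?_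
        have hsplit (u : ℝ) :
            (a - u) * exp (-(f + u) * τ) = exp (-f * τ) * ((a - u) * exp (-u * τ)) := by
          rw [mul_left_comm, ← exp_add, neg_add, add_mul]
        simp_rw [hsplit, integral_const_mul, integral_Ioo_sub_mul_exp_neg_mul ha hτ.ne',
          mul_div_assoc]
    _ = ∫ u in Ioo 0 a, ∫ τ in Ioi 0, (a - u) * exp (-(f + u) * τ) :=
        (integral_integral_swap (integrable_sub_mul_exp_neg_add_mul a hf)).symm
    _ = ∫ u in Ioo 0 a, (a - u) / (f + u) := by
        refine setIntegral_congr_fun measurableSet_Ioo fun u (hu : 0 < u ∧ u < a) => ?_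
        rw [integral_const_mul, integral_exp_mul_Ioi (by linarith) 0, mul_zero, exp_zero]
        field_simp
    _ = (a + f) * (log (a + f) - log f) - a := integral_Ioo_sub_div_add ha hf

theorem stmt_6 (c a f : ℝ) (ha : 0 < a) (hf : 0 < f) :
    ∫ τ₃ in Set.Ioi (0:ℝ), ∫ τ₂ in Set.Ioo 0 τ₃, ∫ τ₁ in Set.Ioo 0 τ₂,
      (c / τ₃^2) * Real.exp (-a * τ₁) * Real.exp (-f * τ₃)
      = (c * (a + f) / a^2) * (Real.log (a + f) - Real.log f) - c / a := by
  have hinner : ∀ τ₃ ∈ Ioi (0:ℝ), ∫ τ₂ in Ioo 0 τ₃, ∫ τ₁ in Ioo 0 τ₂,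
      (c / τ₃^2) * exp (-a * τ₁) * exp (-f * τ₃)
        = c / a ^ 2 * (exp (-f * τ₃) * (a * τ₃ - 1 + exp (-a * τ₃)) / τ₃ ^ 2) := by
    intro τ₃ (hτ₃ : 0 < τ₃)
    simp_rw [mul_right_comm _ (exp (-a * _)), integral_const_mul,
      integral_Ioo_integral_Ioo_exp_neg_mul ha.ne' hτ₃.le]
    field_simp
  rw [setIntegral_congr_fun measurableSet_Ioi hinner, integral_const_mul,
    integral_Ioi_exp_neg_mul_mul_sub_one_add_exp_neg_mul_div_sq ha.le hf]
  field_simp
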